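/- arXiv:1106.0057 — 3 statements merged into one kernel-verified Lean document; each statement's English description precedes it below -/
import Mathlib

section
/- Let p be prime and let M be the 3×3 matrix over Z/pZ given by rows [(i1-i2, i2-i5, 0), (i1-i6, 0, i6-i4), (0, i5-i3, i3-i4)], where the integers i1,...,i6 satisfy the check-consistency conditions that i1≠i2, i2≠i5, i1≠i5, i1≠i6, i6≠i4, i1≠i4, i5≠i3, i3≠i4, i5≠i4 (all mod p). If det(M) ≡ 0 (mod p) and u = (u2,u3,u4) is a nonzero vector in the null space of M over Z/pZ, then all coordinates u2, u3, u4 are nonzero and pairwise distinct in Z/pZ. -/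
/-! Each row of the matrix relates two of the coordinates with two nonzero coefficients whose sum
`i1 - i5`, `i1 - i4` or `i5 - i4` is also nonzero. Nonzero coefficients mean that a coordinate
vanishes exactly when its row partner does, so a nonzero null vector has no zero coordinate; a
nonzero sum of coefficients forbids two equal nonzero coordinates in the same row. -/

lemma Matrix.mulVec_eq_zero_iff_of_sparse {R : Type*} [Ring R] (a b c d e f : R)
    (u : Fin 3 → R) :
    (!![a, b, 0; c, 0, d; 0, e, f]).mulVec u = 0 ↔
      a * u 0 + b * u 1 = 0 ∧ c * u 0 + d * u 2 = 0 ∧ e * u 1 + f * u 2 = 0 := by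
  simp [funext_iff, Fin.forall_fin_succ, dotProduct, Fin.sum_univ_three]

section NoZeroDivisors

variable {R : Type*} [Ring R] [NoZeroDivisors R]

lemma eq_zero_iff_of_mul_add_mul_eq_zero {a b x y : R} (h : a * x + b * y = 0) (ha : a ≠ 0)
    (hb : b ≠ 0) : x = 0 ↔ y = 0 := by
  constructor <;> rintro rfl <;> simp_all

lemma ne_of_mul_add_mul_eq_zero {a b x y : R} (h : a * x + b * y = 0) (hab : a + b ≠ 0)
    (hx : x ≠ 0) : x ≠ y := by
  rintro rfl
  rw [← add_mul] at h
  exact hx ((mul_eq_zero.mp h).resolve_left hab)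

theorem coords_ne_zero_and_pairwise_ne_of_sparse_mulVec_eq_zero {a b c d e f : R}
    (ha : a ≠ 0) (hb : b ≠ 0) (hc : c ≠ 0) (hd : d ≠ 0)
    (hab : a + b ≠ 0) (hcd : c + d ≠ 0) (hef : e + f ≠ 0)
    {u : Fin 3 → R} (hu : (!![a, b, 0; c, 0, d; 0, e, f]).mulVec u = 0) (hne : u ≠ 0) :
    u 0 ≠ 0 ∧ u 1 ≠ 0 ∧ u 2 ≠ 0 ∧ u 0 ≠ u 1 ∧ u 0 ≠ u 2 ∧ u 1 ≠ u 2 := by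
  obtain ⟨row₁, row₂, row₃⟩ := (Matrix.mulVec_eq_zero_iff_of_sparse a b c d e f u).mp hu
  have iff₁ := eq_zero_iff_of_mul_add_mul_eq_zero row₁ ha hb
  have iff₂ := eq_zero_iff_of_mul_add_mul_eq_zero row₂ hc hd
  have hu₀ : u 0 ≠ 0 := by
    intro h₀
    have h₁ := iff₁.mp h₀
    have h₂ := iff₂.mp h₀
    exact hne (funext fun i => by fin_cases i <;> assumption)
  have hu₁ : u 1 ≠ 0 := mt iff₁.mpr hu₀
  have hu₂ : u 2 ≠ 0 := mt iff₂.mpr hu₀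
  exact ⟨hu₀, hu₁, hu₂, ne_of_mul_add_mul_eq_zero row₁ hab hu₀,
    ne_of_mul_add_mul_eq_zero row₂ hcd hu₀, ne_of_mul_add_mul_eq_zero row₃ hef hu₁⟩

end NoZeroDivisors

theorem ccm48_null_vector_coords_general (p : ℕ) [Fact p.Prime]
    (i1 i2 i3 i4 i5 i6 : ZMod p)
    (h12 : i1 ≠ i2) (h25 : i2 ≠ i5) (h15 : i1 ≠ i5)
    (h16 : i1 ≠ i6) (h64 : i6 ≠ i4) (h14 : i1 ≠ i4)
    (h54 : i5 ≠ i4)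
    (M : Matrix (Fin 3) (Fin 3) (ZMod p))
    (hM : M = !![i1 - i2, i2 - i5, 0;
                 i1 - i6, 0, i6 - i4;
                 0, i5 - i3, i3 - i4])
    (u : Fin 3 → ZMod p) (hu : M.mulVec u = 0) (hne : u ≠ 0) :
    u 0 ≠ 0 ∧ u 1 ≠ 0 ∧ u 2 ≠ 0 ∧ u 0 ≠ u 1 ∧ u 0 ≠ u 2 ∧ u 1 ≠ u 2 := by
  subst hM
  refine coords_ne_zero_and_pairwise_ne_of_sparse_mulVec_eq_zero (sub_ne_zero.mpr h12)
    (sub_ne_zero.mpr h25) (sub_ne_zero.mpr h16) (sub_ne_zero.mpr h64) ?_ ?_ ?_ hu hne <;>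
    rwa [sub_add_sub_cancel, sub_ne_zero]

/-- For the cycle consistency matrix of the (4,8) absorbing set of a
column-weight-5 SCB LDPC code, under the check-consistency conditions,
any nonzero null-space vector has all coordinates nonzero and pairwise
distinct in `ℤ/pℤ`. -/
theorem ccm48_null_vector_coords (p : ℕ) [Fact p.Prime]
    (i1 i2 i3 i4 i5 i6 : ZMod p)
    (h12 : i1 ≠ i2) (h25 : i2 ≠ i5) (h15 : i1 ≠ i5)
    (h16 : i1 ≠ i6) (h64 : i6 ≠ i4) (h14 : i1 ≠ i4)
    (h53 : i5 ≠ i3) (h34 : i3 ≠ i4) (h54 : i5 ≠ i4)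
    (M : Matrix (Fin 3) (Fin 3) (ZMod p))
    (hM : M = !![i1 - i2, i2 - i5, 0;
                 i1 - i6, 0, i6 - i4;
                 0, i5 - i3, i3 - i4])
    (hdet : M.det = 0)
    (u : Fin 3 → ZMod p) (hu : M.mulVec u = 0) (hne : u ≠ 0) :
    u 0 ≠ 0 ∧ u 1 ≠ 0 ∧ u 2 ≠ 0 ∧ u 0 ≠ u 1 ∧ u 0 ≠ u 2 ∧ u 1 ≠ u 2 :=
  ccm48_null_vector_coords_general p i1 i2 i3 i4 i5 i6 h12 h25 h15 h16 h64 h14 h54 M hM u hu hne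
end

section
/- For all primes p > 17, there are no pairwise distinct x, y, z, w ∈ {0, 1, 2, 3, 4} such that (z−x)(w−y) + (z−y)(w−x) ≡ 0 (mod p). -/
/-!
The form `(z - x)(w - y) + (z - y)(w - x)` vanishes exactly when `z, w` separate `x, y`
harmonically, which never happens for distinct labels in `{0, …, 4}`; on those labels the form
is at most `17` in absolute value (attained at `(x, y, z, w) = (0, 1, 4, 3)`). A nonzero integer
has no divisor exceeding its absolute value, so no `p > 17` divides it.
-/

lemma abs_harmonic_form_pos_and_le_seventeen {x y z w : ℤ}
    (hx : x ∈ ({0, 1, 2, 3, 4} : Set ℤ)) (hy : y ∈ ({0, 1, 2, 3, 4} : Set ℤ))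
    (hz : z ∈ ({0, 1, 2, 3, 4} : Set ℤ)) (hw : w ∈ ({0, 1, 2, 3, 4} : Set ℤ))
    (hxy : x ≠ y) (hxz : x ≠ z) (hxw : x ≠ w) (hyz : y ≠ z) (hyw : y ≠ w) (hzw : z ≠ w) :
    0 < |(z - x) * (w - y) + (z - y) * (w - x)| ∧
      |(z - x) * (w - y) + (z - y) * (w - x)| ≤ 17 := by
  rw [abs_pos, abs_le]
  simp only [Set.mem_insert_iff, Set.mem_singleton_iff] at hx hy hz hw
  rcases hx with rfl | rfl | rfl | rfl | rfl <;> rcases hy with rfl | rfl | rfl | rfl | rfl <;>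
    rcases hz with rfl | rfl | rfl | rfl | rfl <;> rcases hw with rfl | rfl | rfl | rfl | rfl <;>
    omega

theorem no_48_assignment1_solution_general (p : ℕ) (hp17 : 17 < p)
    (x y z w : ℤ)
    (hx : x ∈ ({0, 1, 2, 3, 4} : Set ℤ)) (hy : y ∈ ({0, 1, 2, 3, 4} : Set ℤ))
    (hz : z ∈ ({0, 1, 2, 3, 4} : Set ℤ)) (hw : w ∈ ({0, 1, 2, 3, 4} : Set ℤ))
    (hxy : x ≠ y) (hxz : x ≠ z) (hxw : x ≠ w)
    (hyz : y ≠ z) (hyw : y ≠ w) (hzw : z ≠ w) :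
    ¬ ((p : ℤ) ∣ ((z - x) * (w - y) + (z - y) * (w - x))) := by
  intro hdvd
  obtain ⟨hpos, hle⟩ :=
    abs_harmonic_form_pos_and_le_seventeen hx hy hz hw hxy hxz hxw hyz hyw hzw
  have hzero := Int.eq_zero_of_abs_lt_dvd hdvd (by omega)
  simp [hzero] at hpos

/-- For all primes `p > 17`, there are no pairwise distinct
`x, y, z, w ∈ {0,1,2,3,4}` with `(z−x)(w−y) + (z−y)(w−x) ≡ 0 (mod p)`. -/
theorem no_48_assignment1_solution (p : ℕ) (hp : p.Prime) (hp17 : 17 < p)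
    (x y z w : ℤ)
    (hx : x ∈ ({0, 1, 2, 3, 4} : Set ℤ)) (hy : y ∈ ({0, 1, 2, 3, 4} : Set ℤ))
    (hz : z ∈ ({0, 1, 2, 3, 4} : Set ℤ)) (hw : w ∈ ({0, 1, 2, 3, 4} : Set ℤ))
    (hxy : x ≠ y) (hxz : x ≠ z) (hxw : x ≠ w)
    (hyz : y ≠ z) (hyw : y ≠ w) (hzw : z ≠ w) :
    ¬ ((p : ℤ) ∣ ((z - x) * (w - y) + (z - y) * (w - x))) :=
  no_48_assignment1_solution_general p hp17 x y z w hx hy hz hw hxy hxz hxw hyz hyw hzw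
end

section
/- With row-selection values a = (0, 1, 2, 4, 6), for every prime p > 23 and for all injections assigning distinct values x, y, z, w, t from {0, 1, 2, 4, 6}: (z−x)(w−y) + (z−y)(w−x) ≢ 0 (mod p) whenever x,y,z,w are distinct, and (z−w)(x−t)(y−z) − (y−w)(x−z)(z−t) ≢ 0 (mod p) whenever x,y,z,w,t are distinct. -/
/-!
Over distinct labels from `{0, 1, 2, 4, 6}` the two determinant expressions take only finitely
many values, all nonzero and with no prime factor above `23` (the extreme cases are
`38 = 2 · 19` and `±92 = ±4 · 23`). Hence each value divides `23!`, and a prime `p > 23`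
divides none of them.
-/

open Nat

theorem Int.not_prime_dvd_of_dvd_factorial {p m : ℕ} (hp : p.Prime) (hmp : m < p) {n : ℤ}
    (hn : n ∣ (m ! : ℤ)) : ¬ (p : ℤ) ∣ n := fun hpn =>
  hmp.not_ge <| hp.dvd_factorial.1 <| Int.natCast_dvd_natCast.1 (hpn.trans hn)

theorem fourLabel_det_dvd_factorial :
    ∀ x ∈ ({0, 1, 2, 4, 6} : Finset ℤ), ∀ y ∈ ({0, 1, 2, 4, 6} : Finset ℤ),
    ∀ z ∈ ({0, 1, 2, 4, 6} : Finset ℤ), ∀ w ∈ ({0, 1, 2, 4, 6} : Finset ℤ),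
    (x ≠ y ∧ x ≠ z ∧ x ≠ w ∧ y ≠ z ∧ y ≠ w ∧ z ≠ w) →
      (z - x) * (w - y) + (z - y) * (w - x) ∣ (23 ! : ℤ) := by
  decide

theorem fiveLabel_det_dvd_factorial :
    ∀ x ∈ ({0, 1, 2, 4, 6} : Finset ℤ), ∀ y ∈ ({0, 1, 2, 4, 6} : Finset ℤ),
    ∀ z ∈ ({0, 1, 2, 4, 6} : Finset ℤ), ∀ w ∈ ({0, 1, 2, 4, 6} : Finset ℤ),
    ∀ t ∈ ({0, 1, 2, 4, 6} : Finset ℤ),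
    (x ≠ y ∧ x ≠ z ∧ x ≠ w ∧ x ≠ t ∧ y ≠ z ∧ y ≠ w ∧ y ≠ t ∧ z ≠ w ∧ z ≠ t ∧ w ≠ t) →
      (z - w) * (x - t) * (y - z) - (y - w) * (x - z) * (z - t) ∣ (23 ! : ℤ) := by
  decide

/-- With row-selection values `{0,1,2,4,6}`, for every prime `p > 23` and
distinct labels drawn from `{0,1,2,4,6}`, neither determinant condition of the
(4,8) absorbing set holds mod `p`. -/
theorem rsf01246_no_48 (p : ℕ) (hp : p.Prime) (hp23 : 23 < p)
    (x y z w t : ℤ)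
    (hx : x ∈ ({0, 1, 2, 4, 6} : Set ℤ)) (hy : y ∈ ({0, 1, 2, 4, 6} : Set ℤ))
    (hz : z ∈ ({0, 1, 2, 4, 6} : Set ℤ)) (hw : w ∈ ({0, 1, 2, 4, 6} : Set ℤ))
    (ht : t ∈ ({0, 1, 2, 4, 6} : Set ℤ)) :
    ((x ≠ y ∧ x ≠ z ∧ x ≠ w ∧ y ≠ z ∧ y ≠ w ∧ z ≠ w) →
      ¬ ((p : ℤ) ∣ ((z - x) * (w - y) + (z - y) * (w - x)))) ∧
    ((x ≠ y ∧ x ≠ z ∧ x ≠ w ∧ x ≠ t ∧ y ≠ z ∧ y ≠ w ∧ y ≠ t ∧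
        z ≠ w ∧ z ≠ t ∧ w ≠ t) →
      ¬ ((p : ℤ) ∣ ((z - w) * (x - t) * (y - z) - (y - w) * (x - z) * (z - t)))) := by
  have mem {a : ℤ} (ha : a ∈ ({0, 1, 2, 4, 6} : Set ℤ)) : a ∈ ({0, 1, 2, 4, 6} : Finset ℤ) := by
    simpa using ha
  exact ⟨fun hne => Int.not_prime_dvd_of_dvd_factorial hp hp23 <|
      fourLabel_det_dvd_factorial x (mem hx) y (mem hy) z (mem hz) w (mem hw) hne,
    fun hne => Int.not_prime_dvd_of_dvd_factorial hp hp23 <|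
      fiveLabel_det_dvd_factorial x (mem hx) y (mem hy) z (mem hz) w (mem hw) t (mem ht) hne⟩
end
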